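/- arXiv:2502.09695 — 4 statements merged into one kernel-verified Lean document; each statement's English description precedes it below -/
import Mathlib

section
/- Let P ∈ ℂ^{n×n} be Hermitian positive definite and let A ∈ ℂ^{n×n}. Then the matrix measure μ(A) = sup over nonzero δ ∈ ℂⁿ of Re(δᴴ P A δ) / Re(δᴴ P δ) equals the largest eigenvalue of the Hermitian matrix (1/2) P^{-1/2}(PA + AᴴP)P^{-1/2}, where P^{1/2} is the Hermitian positive-definite square root of P. -/
/-!
Writing `P = S²` with `S = P^{1/2}` Hermitian and invertible and substituting `δ = S⁻¹ w`, the
quotient defining the matrix measure becomes the Rayleigh quotient `Re (wᴴ M w) / Re (wᴴ w)` of the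
Hermitian matrix `M = ½ S⁻¹ (PA + AᴴP) S⁻¹`, because `Re (δᴴ PA δ)` only sees the Hermitian part
of `PA`. The supremum of a Rayleigh quotient is the largest eigenvalue: `λ_max • 1 - M` is
positive semidefinite, and equality is attained at a corresponding unit eigenvector.
-/

open Matrix
open scoped ComplexOrder

/-- The positive semidefinite square root of a positive semidefinite matrix
(as defined in Mathlib of December 2024, since removed). -/
noncomputable def Matrix.PosSemidef.sqrt {n 𝕜 : Type*} [RCLike 𝕜] [Fintype n] [DecidableEq n]
    {A : Matrix n n 𝕜} (hA : A.PosSemidef) : Matrix n n 𝕜 :=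
  hA.1.eigenvectorUnitary.1 * diagonal ((↑) ∘ (√·) ∘ hA.1.eigenvalues) *
  (star hA.1.eigenvectorUnitary : Matrix n n 𝕜)

/-- The matrix measure of `A` with respect to the weighted inner product
`⟨y, x⟩_P = Re (yᴴ P x)`: the supremum of the Rayleigh-type quotient
`Re (δᴴ P A δ) / Re (δᴴ P δ)` over nonzero `δ`. -/
noncomputable def matrixMeasure {n : ℕ} (P A : Matrix (Fin n) (Fin n) ℂ) : ℝ :=
  ⨆ δ : {v : Fin n → ℂ // v ≠ 0},
    (star δ.1 ⬝ᵥ P.mulVec (A.mulVec δ.1)).re / (star δ.1 ⬝ᵥ P.mulVec δ.1).re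

open scoped MatrixOrder

namespace Matrix

theorem star_mulVec_dotProduct_mulVec_mulVec {n R : Type*} [Fintype n] [NonUnitalSemiring R]
    [StarRing R] (S B : Matrix n n R) (v : n → R) :
    star (S *ᵥ v) ⬝ᵥ B *ᵥ (S *ᵥ v) = star v ⬝ᵥ (Sᴴ * B * S) *ᵥ v := by
  rw [star_mulVec, ← dotProduct_mulVec, mulVec_mulVec, mulVec_mulVec, Matrix.mul_assoc]

theorem iSup_ne_zero_comp_mulVec {n K α : Type*} [Fintype n] [DecidableEq n] [Field K]
    [SupSet α] {S : Matrix n n K} (hS : IsUnit S) (g : (n → K) → α) :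
    ⨆ v : {v : n → K // v ≠ 0}, g (S *ᵥ v.1) = ⨆ v : {v : n → K // v ≠ 0}, g v.1 := by
  have hinj := mulVec_injective_iff_isUnit.mpr hS
  let f (v : {v : n → K // v ≠ 0}) : {v : n → K // v ≠ 0} :=
    ⟨S *ᵥ v.1, (hinj.ne_iff' (mulVec_zero S)).mpr v.2⟩
  have hf : Function.Surjective f := fun w => by
    obtain ⟨v, hv⟩ := mulVec_surjective_iff_isUnit.mpr hS w.1
    exact ⟨⟨v, by rintro rfl; exact w.2 (hv ▸ mulVec_zero S)⟩, Subtype.ext hv⟩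
  exact hf.iSup_comp fun w => g w.1

variable {n 𝕜 : Type*} [RCLike 𝕜] [Fintype n]

theorem re_dotProduct_half_smul_add_conjTranspose_mulVec (B : Matrix n n 𝕜) (v : n → 𝕜) :
    RCLike.re (star v ⬝ᵥ (((1 : 𝕜) / 2) • (B + Bᴴ)) *ᵥ v) = RCLike.re (star v ⬝ᵥ B *ᵥ v) := by
  have hconj : star v ⬝ᵥ Bᴴ *ᵥ v = star (star v ⬝ᵥ B *ᵥ v) := by
    rw [← star_dotProduct_star, star_star, star_mulVec, dotProduct_mulVec]
  rw [smul_mulVec, dotProduct_smul, add_mulVec, dotProduct_add, hconj, smul_eq_mul,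
    RCLike.star_def, RCLike.add_conj, one_div, inv_mul_cancel_left₀ two_ne_zero, RCLike.ofReal_re]

variable [DecidableEq n]

theorem PosSemidef.sqrt_eq_cfcSqrt {A : Matrix n n 𝕜} (hA : A.PosSemidef) :
    hA.sqrt = CFC.sqrt A := by
  rw [CFC.sqrt_eq_real_sqrt A hA.nonneg, cfcₙ_eq_cfc, hA.1.cfc_eq, IsHermitian.cfc,
    Unitary.conjStarAlgAut_apply]
  rfl

theorem PosSemidef.sqrt_mul_self {A : Matrix n n 𝕜} (hA : A.PosSemidef) :
    hA.sqrt * hA.sqrt = A := by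
  rw [hA.sqrt_eq_cfcSqrt, CFC.sqrt_mul_sqrt_self A hA.nonneg]

theorem PosSemidef.conjTranspose_sqrt {A : Matrix n n 𝕜} (hA : A.PosSemidef) :
    hA.sqrtᴴ = hA.sqrt := by
  rw [hA.sqrt_eq_cfcSqrt]
  exact (CFC.sqrt_nonneg A).isSelfAdjoint

theorem PosDef.isUnit_sqrt {A : Matrix n n 𝕜} (hA : A.PosDef) : IsUnit hA.posSemidef.sqrt := by
  rw [hA.posSemidef.sqrt_eq_cfcSqrt, CFC.isUnit_sqrt_iff A hA.posSemidef.nonneg]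
  exact hA.isUnit

theorem IsHermitian.re_dotProduct_mulVec_le {A : Matrix n n 𝕜} (hA : A.IsHermitian) (v : n → 𝕜) :
    RCLike.re (star v ⬝ᵥ A *ᵥ v) ≤ (⨆ i, hA.eigenvalues i) * RCLike.re (star v ⬝ᵥ v) := by
  have hle : A ≤ algebraMap ℝ _ (⨆ i, hA.eigenvalues i) := by
    refine le_algebraMap_of_spectrum_le (fun x hx => ?_) hA.isSelfAdjoint
    obtain ⟨i, rfl⟩ := hA.spectrum_real_eq_range_eigenvalues ▸ hx
    exact le_ciSup (Set.finite_range _).bddAbove i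
  have := (RCLike.nonneg_iff.mp ((sub_nonneg.mpr hle).posSemidef.dotProduct_mulVec_nonneg v)).1
  simpa [sub_mulVec, Algebra.algebraMap_eq_smul_one, smul_mulVec, dotProduct_sub,
    RCLike.smul_re] using this

theorem IsHermitian.star_eigenvectorBasis_dotProduct_self {A : Matrix n n 𝕜} (hA : A.IsHermitian)
    (i : n) : star ⇑(hA.eigenvectorBasis i) ⬝ᵥ ⇑(hA.eigenvectorBasis i) = 1 := by
  rw [dotProduct_comm, ← EuclideanSpace.inner_eq_star_dotProduct, inner_self_eq_norm_sq_to_K,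
    hA.eigenvectorBasis.orthonormal.1 i]
  simp

theorem IsHermitian.iSup_rayleigh_eq_iSup_eigenvalues {A : Matrix n n 𝕜} (hA : A.IsHermitian) :
    ⨆ v : {v : n → 𝕜 // v ≠ 0}, RCLike.re (star v.1 ⬝ᵥ A *ᵥ v.1) / RCLike.re (star v.1 ⬝ᵥ v.1) =
      ⨆ i, hA.eigenvalues i := by
  rcases isEmpty_or_nonempty n with _ | _
  · have : IsEmpty {v : n → 𝕜 // v ≠ 0} := ⟨fun v => v.2 (Subsingleton.elim _ _)⟩
    simp [Real.iSup_of_isEmpty]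
  have hbasis (i : n) : ⇑(hA.eigenvectorBasis i) ≠ 0 := by
    intro h
    simpa [h] using hA.star_eigenvectorBasis_dotProduct_self i
  have : Nonempty {v : n → 𝕜 // v ≠ 0} := ⟨⟨_, hbasis (Classical.arbitrary n)⟩⟩
  have hquot (v : {v : n → 𝕜 // v ≠ 0}) :
      RCLike.re (star v.1 ⬝ᵥ A *ᵥ v.1) / RCLike.re (star v.1 ⬝ᵥ v.1) ≤ ⨆ i, hA.eigenvalues i := by
    have hpos : 0 < RCLike.re (star v.1 ⬝ᵥ v.1) :=
      (RCLike.pos_iff.mp ((dotProduct_star_self_nonneg _).lt_of_ne'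
        (dotProduct_star_self_eq_zero.not.mpr v.2))).1
    exact (div_le_iff₀ hpos).mpr (hA.re_dotProduct_mulVec_le v.1)
  refine le_antisymm (ciSup_le hquot) (ciSup_le fun i => ?_)
  refine le_ciSup_of_le ⟨_, Set.forall_mem_range.mpr hquot⟩ ⟨_, hbasis i⟩ ?_
  rw [hA.star_eigenvectorBasis_dotProduct_self, ← hA.eigenvalues_eq]
  simp

end Matrix

theorem matrixMeasure_eq_largest_eigenvalue_general {n : ℕ}
    (P A : Matrix (Fin n) (Fin n) ℂ) (hP : P.PosDef)
    (hM : (((1 : ℂ) / 2) •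
        ((hP.posSemidef.sqrt)⁻¹ * (P * A + Aᴴ * P) * (hP.posSemidef.sqrt)⁻¹)).IsHermitian) :
    matrixMeasure P A = ⨆ i, hM.eigenvalues i := by
  have hSS := hP.posSemidef.sqrt_mul_self
  have hSH := hP.posSemidef.conjTranspose_sqrt
  have hS := hP.isUnit_sqrt
  set S := hP.posSemidef.sqrt
  set M := ((1 : ℂ) / 2) • (S⁻¹ * (P * A + Aᴴ * P) * S⁻¹)
  have hSMS : Sᴴ * M * S = ((1 : ℂ) / 2) • (P * A + (P * A)ᴴ) := by
    have hdet := (isUnit_iff_isUnit_det S).mp hS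
    rw [hSH, conjTranspose_mul, hP.isHermitian.eq, Matrix.mul_smul, Matrix.smul_mul,
      ← Matrix.mul_assoc, mul_nonsing_inv_cancel_left (h := hdet),
      nonsing_inv_mul_cancel_right (h := hdet)]
  rw [← hM.iSup_rayleigh_eq_iSup_eigenvalues, ← iSup_ne_zero_comp_mulVec hS
    (fun v => RCLike.re (star v ⬝ᵥ M *ᵥ v) / RCLike.re (star v ⬝ᵥ v))]
  refine iSup_congr fun δ => ?_
  have hden : star (S *ᵥ δ.1) ⬝ᵥ S *ᵥ δ.1 = star δ.1 ⬝ᵥ P *ᵥ δ.1 := by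
    simpa [hSH, hSS] using star_mulVec_dotProduct_mulVec_mulVec S 1 δ.1
  rw [star_mulVec_dotProduct_mulVec_mulVec, hSMS, hden,
    re_dotProduct_half_smul_add_conjTranspose_mulVec, mulVec_mulVec]
  rfl

/-- the matrix measure of `A` w.r.t. the inner product induced by a Hermitian
positive-definite `P` equals the largest eigenvalue of the Hermitian matrix
`(1/2) P^{-1/2} (P A + Aᴴ P) P^{-1/2}`, where `P^{1/2}` is the Hermitian
positive-semidefinite square root of `P`. -/
theorem matrixMeasure_eq_largest_eigenvalue {n : ℕ} (hn : 0 < n)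
    (P A : Matrix (Fin n) (Fin n) ℂ) (hP : P.PosDef)
    (hM : (((1 : ℂ) / 2) •
        ((hP.posSemidef.sqrt)⁻¹ * (P * A + Aᴴ * P) * (hP.posSemidef.sqrt)⁻¹)).IsHermitian) :
    matrixMeasure P A = ⨆ i, hM.eigenvalues i :=
  matrixMeasure_eq_largest_eigenvalue_general P A hP hM
end

section
/- Let D ⊆ ℂⁿ be convex, let P ∈ ℂ^{n×n} be Hermitian positive definite, and let f : ℝ × D → ℂⁿ be continuously differentiable in the state. Suppose there is c > 0 such that for all t ∈ ℝ, x ∈ D, and δ ∈ ℂⁿ, Re(δᴴ P (Df(t,x)δ)) ≤ -c · Re(δᴴ P δ), where Df(t,x) is the ℝ-linear Jacobian of x ↦ f(t,x) (ℂⁿ identified with ℝ^{2n}). Then for any two differentiable curves x₁, x₂ : [t₀,∞) → D satisfying ẋᵢ(t) = f(t, xᵢ(t)), one has ‖x₁(t) - x₂(t)‖_P ≤ e^{-c(t - t₀)} ‖x₁(t₀) - x₂(t₀)‖_P for all t ≥ t₀. -/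
open Matrix
open scoped ComplexOrder

/-!
Along two solutions put `δ = x₁ - x₂` and `V = ⟨δ, δ⟩_P`; since `P` is Hermitian,
`V' = 2 ⟨δ, f(t, x₁) - f(t, x₂)⟩_P`. The mean value theorem on the segment `[x₂, x₁] ⊆ D`
turns the infinitesimal bound on `Df` into `⟨δ, f(t, x₁) - f(t, x₂)⟩_P ≤ -c V`, so `V' ≤ -2c V`
and Grönwall's inequality gives `V(t) ≤ e^{-2c (t - t₀)} V(t₀)`.
-/

/-- The norm associated with the inner product `⟨y, x⟩_P = Re (yᴴ P x)`. -/
noncomputable def normP {n : ℕ} (P : Matrix (Fin n) (Fin n) ℂ) (v : Fin n → ℂ) : ℝ :=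
  Real.sqrt ((star v ⬝ᵥ P.mulVec v).re)

theorem le_mul_exp_of_hasDerivAt_le_mul {V V' : ℝ → ℝ} {K t₀ : ℝ}
    (hV : ∀ s, t₀ ≤ s → HasDerivAt V (V' s) s) (bound : ∀ s, t₀ ≤ s → V' s ≤ K * V s)
    {t : ℝ} (ht : t₀ ≤ t) : V t ≤ V t₀ * Real.exp (K * (t - t₀)) := by
  have h := le_gronwallBound_of_liminf_deriv_right_le (f := V) (ε := 0) (b := t)
    (fun s hs => (hV s hs.1).continuousAt.continuousWithinAt)
    (fun s hs _ hr => (hV s hs.1).hasDerivWithinAt.liminf_right_slope_le hr) le_rfl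
    (fun s hs => by simpa using bound s hs.1) t ⟨ht, le_rfl⟩
  rwa [gronwallBound_ε0] at h

section BilinearForm

variable {E : Type*} [NormedAddCommGroup E] [NormedSpace ℝ E] {B : E →L[ℝ] E →L[ℝ] ℝ}

theorem ContinuousLinearMap.hasDerivAt_bilinear_self (hB : ∀ u v, B u v = B v u)
    {u : ℝ → E} {u' : E} {s : ℝ} (hu : HasDerivAt u u' s) :
    HasDerivAt (fun s => B (u s) (u s)) (2 * B (u s) u') s := by
  have h := B.hasDerivAt_of_bilinear (fun _ => hu) (fun _ => hu)
  rwa [hB u', ← two_mul] at h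

theorem Convex.bilinear_sub_image_sub_le {D : Set E} (hD : Convex ℝ D) {f : E → E}
    {Df : E → E →L[ℝ] E} (hf : ∀ x ∈ D, HasFDerivAt f (Df x) x) {c : ℝ}
    (hcontr : ∀ x ∈ D, ∀ δ, B δ (Df x δ) ≤ -c * B δ δ) {x y : E} (hx : x ∈ D) (hy : y ∈ D) :
    B (x - y) (f x - f y) ≤ -c * B (x - y) (x - y) := by
  obtain ⟨z, hz, hmvt⟩ := domain_mvt (f := fun z => B (x - y) (f z))
    (fun z hz => ((B (x - y)).hasFDerivAt.comp z (hf z hz)).hasFDerivWithinAt) hD hy hx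
  rw [← map_sub] at hmvt
  rw [hmvt]
  exact hcontr z (hD.segment_subset hy hx hz) (x - y)

theorem bilinear_sub_le_exp_mul_of_infinitesimal_contraction (hB : ∀ u v, B u v = B v u)
    {D : Set E} (hD : Convex ℝ D) {f : ℝ → E → E} {Df : ℝ → E → E →L[ℝ] E}
    (hf : ∀ t, ∀ x ∈ D, HasFDerivAt (f t) (Df t x) x) {c : ℝ}
    (hcontr : ∀ t, ∀ x ∈ D, ∀ δ, B δ (Df t x δ) ≤ -c * B δ δ) {t₀ : ℝ} {x₁ x₂ : ℝ → E}
    (hx₁ : ∀ t, t₀ ≤ t → x₁ t ∈ D ∧ HasDerivAt x₁ (f t (x₁ t)) t)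
    (hx₂ : ∀ t, t₀ ≤ t → x₂ t ∈ D ∧ HasDerivAt x₂ (f t (x₂ t)) t) {t : ℝ} (ht : t₀ ≤ t) :
    B (x₁ t - x₂ t) (x₁ t - x₂ t) ≤
      B (x₁ t₀ - x₂ t₀) (x₁ t₀ - x₂ t₀) * Real.exp (-2 * c * (t - t₀)) := by
  refine le_mul_exp_of_hasDerivAt_le_mul
    (fun s hs => B.hasDerivAt_bilinear_self hB ((hx₁ s hs).2.fun_sub (hx₂ s hs).2))
    (fun s hs => ?_) ht
  have := hD.bilinear_sub_image_sub_le (hf s) (hcontr s) (hx₁ s hs).1 (hx₂ s hs).1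
  linarith

end BilinearForm

section ReForm

variable {ι : Type*} [Fintype ι]

theorem Matrix.isBilinearMap_re_dotProduct_mulVec (P : Matrix ι ι ℂ) :
    IsBilinearMap ℝ fun u v : ι → ℂ => (star u ⬝ᵥ P *ᵥ v).re where
  add_left u₁ u₂ v := by simp [add_dotProduct]
  smul_left a u v := by simp [star_smul, smul_dotProduct]
  add_right u v₁ v₂ := by simp [mulVec_add]
  smul_right a u v := by simp [mulVec_smul]

noncomputable def Matrix.reFormCLM (P : Matrix ι ι ℂ) : (ι → ℂ) →L[ℝ] (ι → ℂ) →L[ℝ] ℝ :=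
  P.isBilinearMap_re_dotProduct_mulVec.toContinuousBilinearMap

theorem Matrix.IsHermitian.reFormCLM_comm {P : Matrix ι ι ℂ} (hP : P.IsHermitian)
    (u v : ι → ℂ) : P.reFormCLM u v = P.reFormCLM v u := by
  show (star u ⬝ᵥ P *ᵥ v).re = (star v ⬝ᵥ P *ᵥ u).re
  rw [star_dotProduct, star_mulVec, hP.eq, ← dotProduct_mulVec]
  exact Complex.conj_re _

theorem normP_eq_sqrt_reFormCLM {n : ℕ} (P : Matrix (Fin n) (Fin n) ℂ) (v : Fin n → ℂ) :
    normP P v = Real.sqrt (P.reFormCLM v v) :=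
  rfl

end ReForm

theorem contraction_of_infinitesimal_contraction_general {n : ℕ}
    (D : Set (Fin n → ℂ)) (hD : Convex ℝ D)
    (P : Matrix (Fin n) (Fin n) ℂ) (hP : P.PosDef)
    (f : ℝ → (Fin n → ℂ) → (Fin n → ℂ))
    (Df : ℝ → (Fin n → ℂ) → ((Fin n → ℂ) →L[ℝ] (Fin n → ℂ)))
    (hf : ∀ t : ℝ, ∀ x ∈ D, HasFDerivAt (f t) (Df t x) x)
    (c : ℝ)
    (hcontr : ∀ t : ℝ, ∀ x ∈ D, ∀ δ : Fin n → ℂ,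
      (star δ ⬝ᵥ P.mulVec (Df t x δ)).re ≤ -c * (star δ ⬝ᵥ P.mulVec δ).re)
    (t₀ : ℝ) (x₁ x₂ : ℝ → (Fin n → ℂ))
    (hx₁ : ∀ t, t₀ ≤ t → x₁ t ∈ D ∧ HasDerivAt x₁ (f t (x₁ t)) t)
    (hx₂ : ∀ t, t₀ ≤ t → x₂ t ∈ D ∧ HasDerivAt x₂ (f t (x₂ t)) t) :
    ∀ t, t₀ ≤ t →
      normP P (x₁ t - x₂ t) ≤ Real.exp (-c * (t - t₀)) * normP P (x₁ t₀ - x₂ t₀) := by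
  intro t ht
  have hV := bilinear_sub_le_exp_mul_of_infinitesimal_contraction (B := P.reFormCLM)
    hP.isHermitian.reFormCLM_comm hD hf hcontr hx₁ hx₂ ht
  rw [normP_eq_sqrt_reFormCLM, normP_eq_sqrt_reFormCLM, ← Real.sqrt_sq (Real.exp_pos _).le,
    ← Real.sqrt_mul (sq_nonneg _)]
  refine Real.sqrt_le_sqrt (hV.trans_eq ?_)
  rw [mul_comm, sq, ← Real.exp_add]
  ring_nf

/-- if the real-linear Jacobian of the (continuously differentiable in state)
vector field `f` satisfies the infinitesimal contraction condition
`Re (δᴴ P (Df(t,x) δ)) ≤ -c Re (δᴴ P δ)` uniformly on a convex domain `D`, then any two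
solutions contract exponentially in the `P`-weighted norm. -/
theorem contraction_of_infinitesimal_contraction {n : ℕ}
    (D : Set (Fin n → ℂ)) (hD : Convex ℝ D)
    (P : Matrix (Fin n) (Fin n) ℂ) (hP : P.PosDef)
    (f : ℝ → (Fin n → ℂ) → (Fin n → ℂ))
    (Df : ℝ → (Fin n → ℂ) → ((Fin n → ℂ) →L[ℝ] (Fin n → ℂ)))
    (hf : ∀ t : ℝ, ∀ x ∈ D, HasFDerivAt (f t) (Df t x) x)
    (hf' : ∀ t : ℝ, ContinuousOn (Df t) D)
    (c : ℝ) (hc : 0 < c)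
    (hcontr : ∀ t : ℝ, ∀ x ∈ D, ∀ δ : Fin n → ℂ,
      (star δ ⬝ᵥ P.mulVec (Df t x δ)).re ≤ -c * (star δ ⬝ᵥ P.mulVec δ).re)
    (t₀ : ℝ) (x₁ x₂ : ℝ → (Fin n → ℂ))
    (hx₁ : ∀ t, t₀ ≤ t → x₁ t ∈ D ∧ HasDerivAt x₁ (f t (x₁ t)) t)
    (hx₂ : ∀ t, t₀ ≤ t → x₂ t ∈ D ∧ HasDerivAt x₂ (f t (x₂ t)) t) :
    ∀ t, t₀ ≤ t →
      normP P (x₁ t - x₂ t) ≤ Real.exp (-c * (t - t₀)) * normP P (x₁ t₀ - x₂ t₀) :=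
  contraction_of_infinitesimal_contraction_general D hD P hP f Df hf c hcontr t₀ x₁ x₂ hx₁ hx₂
end

section
/- Horizontality of the projected dynamics: let R ∈ ℂ^{n×n} be Hermitian positive definite and equip ℂⁿ with ⟨y,x⟩ = Re(yᴴ R⁻¹ x). Let J ∈ ℂ^{n×n} be skew-Hermitian and g ∈ ℂⁿ. Then ⟨J g, R g⟩ = Re((Jg)ᴴ R⁻¹ (Rg)) = 0; consequently, if Jg ≠ 0 and 𝒫 denotes the orthogonal projection (with respect to ⟨·,·⟩) of ℂⁿ onto the real-orthogonal complement of the real span of Jg, then 𝒫((J - R)g) = -Rg. -/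
open Matrix
open scoped ComplexOrder

lemma re_skew_zero {n : ℕ} (J : Matrix (Fin n) (Fin n) ℂ) (hJ : Jᴴ = -J)
    (g : Fin n → ℂ) : (star (J.mulVec g) ⬝ᵥ g).re = 0 := by
  have h1 : star (J.mulVec g) ⬝ᵥ g = star g ⬝ᵥ Jᴴ.mulVec g := by
    rw [Matrix.star_mulVec, Matrix.dotProduct_mulVec]
  have h2 : star (star (J.mulVec g) ⬝ᵥ g) = star g ⬝ᵥ J.mulVec g := by
    simp [dotProduct, Finset.sum_comm, mul_comm]
  have key : star (J.mulVec g) ⬝ᵥ g = -(star g ⬝ᵥ J.mulVec g) := by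
    rw [h1, hJ, Matrix.neg_mulVec, dotProduct_neg]
  have e1 : (star (J.mulVec g) ⬝ᵥ g).re = -((star g ⬝ᵥ J.mulVec g)).re := by
    rw [key]; simp
  have e2 : (star g ⬝ᵥ J.mulVec g).re = (star (J.mulVec g) ⬝ᵥ g).re := by
    rw [← h2]; simp
  linarith

/-- horizontality of the projected dynamics.  With the inner product
`⟨y, x⟩ = Re (yᴴ R⁻¹ x)` induced by the Hermitian positive-definite damping matrix `R`,
and `J` skew-Hermitian: (i) `⟨J g, R g⟩ = 0`; (ii) if `J g ≠ 0`, the orthogonal projection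
of `(J - R) g` onto the real-orthogonal complement of the real span of `J g`
equals `-R g`. -/
theorem projected_dynamics_horizontal {n : ℕ}
    (R : Matrix (Fin n) (Fin n) ℂ) (hR : R.PosDef)
    (J : Matrix (Fin n) (Fin n) ℂ) (hJ : Jᴴ = -J)
    (g : Fin n → ℂ) :
    (star (J.mulVec g) ⬝ᵥ R⁻¹.mulVec (R.mulVec g)).re = 0 ∧
    (J.mulVec g ≠ 0 →
      (J - R).mulVec g -
        ((star (J.mulVec g) ⬝ᵥ R⁻¹.mulVec ((J - R).mulVec g)).re /
          (star (J.mulVec g) ⬝ᵥ R⁻¹.mulVec (J.mulVec g)).re) • J.mulVec g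
        = -(R.mulVec g)) := by
  have hinv : R⁻¹.mulVec (R.mulVec g) = g := by
    rw [Matrix.mulVec_mulVec, Matrix.nonsing_inv_mul R ((Matrix.isUnit_iff_isUnit_det R).1 hR.isUnit), Matrix.one_mulVec]
  have h1 : (star (J.mulVec g) ⬝ᵥ R⁻¹.mulVec (R.mulVec g)).re = 0 := by
    rw [hinv]; exact re_skew_zero J hJ g
  refine ⟨h1, fun hg => ?_⟩
  have hd : 0 < (star (J.mulVec g) ⬝ᵥ R⁻¹.mulVec (J.mulVec g)).re :=
    hR.inv.re_dotProduct_pos hg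
  have hsplit : R⁻¹.mulVec ((J - R).mulVec g)
      = R⁻¹.mulVec (J.mulVec g) - R⁻¹.mulVec (R.mulVec g) := by
    rw [Matrix.sub_mulVec, Matrix.mulVec_sub]
  have hnum : (star (J.mulVec g) ⬝ᵥ R⁻¹.mulVec ((J - R).mulVec g)).re
      = (star (J.mulVec g) ⬝ᵥ R⁻¹.mulVec (J.mulVec g)).re := by
    rw [hsplit, dotProduct_sub, Complex.sub_re, h1, sub_zero]
  rw [hnum, div_self hd.ne', one_smul, Matrix.sub_mulVec]
  abel
end

section
/- (Lemma 1: global convergence to the limit cycle of the forced RLC circuit.) Let Q, R ∈ ℂ^{n×n} be Hermitian positive definite, J₁ ∈ ℂ^{n×n} skew-Hermitian, g ∈ ℂⁿ, and suppose x̄ ∈ ℂⁿ satisfies (J₁ - R)Q x̄ + g = 0. Then every differentiable solution x : [t₀,∞) → ℂⁿ of ẋ(t) = (J₁ - R)Q x(t) + g satisfies (1/2)(x(t) - x̄)ᴴ Q (x(t) - x̄) ≤ e^{-2 λ_min(R) λ_min(Q)(t - t₀)} · (1/2)(x(t₀) - x̄)ᴴ Q (x(t₀) - x̄) for all t ≥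 t₀; in particular lim_{t→∞} x(t) = x̄, so x̄ is the unique possible limit point of every solution. -/
/-!
Along a solution, the error `e = x - x̄` obeys the homogeneous system `ė = (J₁ - R) Q e`, and the
shifted Hamiltonian `W = eᴴ Q e` dissipates: `Ẇ = -2 (Qe)ᴴ R (Qe)`, the skew part `J₁` being
power-preserving. Bounding `R ≥ λ_min(R)` and `Q² ≥ λ_min(Q) Q` gives `Ẇ ≤ -2 λ_min(R) λ_min(Q) W`,
so Grönwall yields the exponential estimate, and `W ≥ λ_min(Q) ‖e‖²` turns it into convergence.
-/

open Matrix Filter Topology Real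
open scoped ComplexOrder

section Calculus

variable {𝕜 m ι 𝔸 : Type*} [NontriviallyNormedField 𝕜] [Fintype ι] [NormedCommRing 𝔸]
  [NormedAlgebra 𝕜 𝔸]

theorem HasDerivAt.dotProduct {f g : 𝕜 → ι → 𝔸} {f' g' : ι → 𝔸} {t : 𝕜}
    (hf : HasDerivAt f f' t) (hg : HasDerivAt g g' t) :
    HasDerivAt (fun s => f s ⬝ᵥ g s) (f' ⬝ᵥ g t + f t ⬝ᵥ g') t := by
  simp only [_root_.dotProduct, ← Finset.sum_add_distrib]
  exact HasDerivAt.fun_sum fun i _ => (hasDerivAt_pi.mp hf i).mul (hasDerivAt_pi.mp hg i)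

theorem HasDerivAt.mulVec (A : Matrix m ι 𝔸) {f : 𝕜 → ι → 𝔸} {f' : ι → 𝔸} {t : 𝕜}
    (hf : HasDerivAt f f' t) : HasDerivAt (fun s => A *ᵥ f s) (A *ᵥ f') t :=
  hasDerivAt_pi.mpr fun i => by
    simpa [Matrix.mulVec] using (hasDerivAt_const t (A i)).dotProduct hf

end Calculus

theorem le_exp_mul_sub_mul_of_hasDerivAt_le {f f' : ℝ → ℝ} {K a : ℝ}
    (hf : ∀ t, a ≤ t → HasDerivAt f (f' t) t) (hbound : ∀ t, a ≤ t → f' t ≤ K * f t)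
    {t : ℝ} (ht : a ≤ t) : f t ≤ exp (K * (t - a)) * f a := by
  have h := le_gronwallBound_of_liminf_deriv_right_le (ε := 0) (b := t)
    (fun s hs => (hf s hs.1).continuousAt.continuousWithinAt)
    (fun s hs _ hr => (hf s hs.1).hasDerivWithinAt.liminf_right_slope_le hr) le_rfl
    (fun s hs => by simpa using hbound s hs.1) t ⟨ht, le_rfl⟩
  rwa [gronwallBound_ε0, mul_comm] at h

theorem tendsto_of_mul_norm_sub_sq_le_exp {E : Type*} [SeminormedAddCommGroup E] {y : ℝ → E}
    {a : E} {m C K t₀ : ℝ} (hm : 0 < m) (hK : K < 0)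
    (hy : ∀ t, t₀ ≤ t → m * ‖y t - a‖ ^ 2 ≤ exp (K * (t - t₀)) * C) :
    Tendsto y atTop (𝓝 a) := by
  have hexp : Tendsto (fun t => exp (K * (t - t₀)) * C / m) atTop (𝓝 0) := by
    have : Tendsto (fun t => K * (t - t₀)) atTop atBot :=
      (tendsto_atTop_add_const_right _ _ tendsto_id).const_mul_atTop_of_neg hK
    simpa using ((tendsto_exp_atBot.comp this).mul_const C).div_const m
  have hsq : Tendsto (fun t => ‖y t - a‖ ^ 2) atTop (𝓝 0) :=
    squeeze_zero' (.of_forall fun _ => by positivity)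
      (eventually_atTop.mpr ⟨t₀, fun t ht => (le_div_iff₀' hm).mpr (hy t ht)⟩) hexp
  rw [tendsto_iff_norm_sub_tendsto_zero]
  simpa using hsq.sqrt

namespace Matrix

variable {𝕜 ι : Type*} [RCLike 𝕜] [Fintype ι]

theorem norm_sq_le_re_star_dotProduct_self (v : ι → 𝕜) :
    ‖v‖ ^ 2 ≤ RCLike.re (star v ⬝ᵥ v) := by
  have hsum : RCLike.re (star v ⬝ᵥ v) = ∑ i, ‖v i‖ ^ 2 := by
    simp only [dotProduct, Pi.star_apply, RCLike.star_def, RCLike.conj_mul, map_sum,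
      ← RCLike.ofReal_pow, RCLike.ofReal_re]
  rw [hsum, ← Real.le_sqrt (norm_nonneg v) (by positivity),
    pi_norm_le_iff_of_nonneg (Real.sqrt_nonneg _)]
  exact fun i => Real.le_sqrt_of_sq_le
    (Finset.single_le_sum (fun j _ => sq_nonneg ‖v j‖) (Finset.mem_univ i))

theorem re_star_dotProduct_mulVec_self_eq_zero {J : Matrix ι ι 𝕜} (hJ : Jᴴ = -J) (x : ι → 𝕜) :
    RCLike.re (star x ⬝ᵥ J *ᵥ x) = 0 := by
  have h : star (star x ⬝ᵥ J *ᵥ x) = -(star x ⬝ᵥ J *ᵥ x) := by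
    rw [← star_dotProduct_star, star_star, star_mulVec, ← dotProduct_mulVec, hJ, neg_mulVec,
      dotProduct_neg]
  have := congrArg RCLike.re h
  rw [RCLike.star_def, RCLike.conj_re, map_neg] at this
  linarith

section Eigenvalues

variable [DecidableEq ι]

theorem PosDef.iInf_eigenvalues_pos [Nonempty ι] {A : Matrix ι ι 𝕜} (hA : A.PosDef) :
    0 < ⨅ i, hA.isHermitian.eigenvalues i := by
  obtain ⟨i, hi⟩ := exists_eq_ciInf_of_finite (f := hA.isHermitian.eigenvalues)
  exact (hA.eigenvalues_pos i).trans_eq hi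

open scoped MatrixOrder in
theorem IsHermitian.posSemidef_sub_smul_one {A : Matrix ι ι 𝕜} (hA : A.IsHermitian) {c : ℝ}
    (hc : ∀ i, c ≤ hA.eigenvalues i) : (A - c • (1 : Matrix ι ι 𝕜)).PosSemidef := by
  have h : algebraMap ℝ (Matrix ι ι 𝕜) c ≤ A := by
    rw [algebraMap_le_iff_le_spectrum hA.isSelfAdjoint, hA.spectrum_real_eq_range_eigenvalues]
    rintro _ ⟨i, rfl⟩
    exact hc i
  rwa [Algebra.algebraMap_eq_smul_one] at h

theorem IsHermitian.mul_re_star_dotProduct_self_le {A : Matrix ι ι 𝕜} (hA : A.IsHermitian) {c : ℝ}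
    (hc : ∀ i, c ≤ hA.eigenvalues i) (x : ι → 𝕜) :
    c * RCLike.re (star x ⬝ᵥ x) ≤ RCLike.re (star x ⬝ᵥ A *ᵥ x) := by
  have h := (hA.posSemidef_sub_smul_one hc).re_dotProduct_nonneg x
  rw [sub_mulVec, smul_mulVec, one_mulVec, dotProduct_sub, dotProduct_smul, map_sub,
    RCLike.smul_re] at h
  linarith

theorem IsHermitian.mul_norm_sq_le_re_dotProduct_mulVec {A : Matrix ι ι 𝕜} (hA : A.IsHermitian)
    {c : ℝ} (hc₀ : 0 ≤ c) (hc : ∀ i, c ≤ hA.eigenvalues i) (x : ι → 𝕜) :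
    c * ‖x‖ ^ 2 ≤ RCLike.re (star x ⬝ᵥ A *ᵥ x) :=
  (mul_le_mul_of_nonneg_left (norm_sq_le_re_star_dotProduct_self x) hc₀).trans
    (hA.mul_re_star_dotProduct_self_le hc x)

theorem IsHermitian.mul_re_dotProduct_mulVec_le {A : Matrix ι ι 𝕜} (hA : A.IsHermitian) {c : ℝ}
    (hc₀ : 0 ≤ c) (hc : ∀ i, c ≤ hA.eigenvalues i) (x : ι → 𝕜) :
    c * RCLike.re (star x ⬝ᵥ A *ᵥ x) ≤ RCLike.re (star (A *ᵥ x) ⬝ᵥ A *ᵥ x) := by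
  set P := A - c • (1 : Matrix ι ι 𝕜)
  have hP : P.PosSemidef := hA.posSemidef_sub_smul_one hc
  have hdecomp : A * A - c • A = Pᴴ * P + c • P := by
    rw [hP.isHermitian.eq]
    simp only [P, sub_mul, mul_sub, smul_mul_assoc, mul_smul_comm, mul_one, one_mul, smul_sub,
      smul_smul]
    module
  have h : (A * A - c • A).PosSemidef := by
    rw [hdecomp]
    exact (posSemidef_conjTranspose_mul_self P).add (hP.smul hc₀)
  have h' := h.re_dotProduct_nonneg x
  rw [sub_mulVec, ← mulVec_mulVec, smul_mulVec, dotProduct_sub, dotProduct_smul, map_sub,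
    RCLike.smul_re, dotProduct_mulVec] at h'
  rw [star_mulVec, hA.eq]
  linarith

end Eigenvalues

theorem IsHermitian.hasDerivAt_re_dotProduct_mulVec {Q : Matrix ι ι 𝕜} (hQ : Q.IsHermitian)
    {e : ℝ → ι → 𝕜} {d : ι → 𝕜} {t : ℝ} (he : HasDerivAt e d t) :
    HasDerivAt (fun s => RCLike.re (star (e s) ⬝ᵥ Q *ᵥ e s))
      (2 * RCLike.re (star (Q *ᵥ e t) ⬝ᵥ d)) t := by
  refine (RCLike.reCLM.hasFDerivAt.comp_hasDerivAt t
    (he.star.dotProduct (he.mulVec Q))).congr_deriv ?_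
  have hsymm : star (e t) ⬝ᵥ Q *ᵥ d = star (Q *ᵥ e t) ⬝ᵥ d := by
    rw [dotProduct_mulVec, star_mulVec, hQ.eq]
  rw [RCLike.reCLM_apply, map_add, hsymm, star_dotProduct d, RCLike.star_def, RCLike.conj_re]
  ring

theorem hasDerivAt_re_dotProduct_mulVec_of_portHamiltonian {Q R J : Matrix ι ι 𝕜}
    (hQ : Q.IsHermitian) (hJ : Jᴴ = -J) {e : ℝ → ι → 𝕜} {t : ℝ}
    (he : HasDerivAt e ((J - R) *ᵥ (Q *ᵥ e t)) t) :
    HasDerivAt (fun s => RCLike.re (star (e s) ⬝ᵥ Q *ᵥ e s))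
      (-2 * RCLike.re (star (Q *ᵥ e t) ⬝ᵥ R *ᵥ (Q *ᵥ e t))) t := by
  convert hQ.hasDerivAt_re_dotProduct_mulVec he using 1
  rw [sub_mulVec, dotProduct_sub, map_sub, re_star_dotProduct_mulVec_self_eq_zero hJ]
  ring

theorem re_dotProduct_mulVec_le_exp_of_portHamiltonian [DecidableEq ι] {Q R J : Matrix ι ι 𝕜}
    (hQ : Q.IsHermitian) (hR : R.IsHermitian) (hJ : Jᴴ = -J) {cQ cR : ℝ}
    (hcQ₀ : 0 ≤ cQ) (hcQ : ∀ i, cQ ≤ hQ.eigenvalues i) (hcR₀ : 0 ≤ cR)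
    (hcR : ∀ i, cR ≤ hR.eigenvalues i) {e : ℝ → ι → 𝕜} {t₀ : ℝ}
    (he : ∀ t, t₀ ≤ t → HasDerivAt e ((J - R) *ᵥ (Q *ᵥ e t)) t) {t : ℝ} (ht : t₀ ≤ t) :
    RCLike.re (star (e t) ⬝ᵥ Q *ᵥ e t)
      ≤ exp (-2 * cR * cQ * (t - t₀)) * RCLike.re (star (e t₀) ⬝ᵥ Q *ᵥ e t₀) := by
  refine le_exp_mul_sub_mul_of_hasDerivAt_le
    (fun s hs => hasDerivAt_re_dotProduct_mulVec_of_portHamiltonian hQ hJ (he s hs))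
    (fun s _ => ?_) ht
  have hRbound := hR.mul_re_star_dotProduct_self_le hcR (Q *ᵥ e s)
  have hQbound := hQ.mul_re_dotProduct_mulVec_le hcQ₀ hcQ (e s)
  nlinarith [mul_le_mul_of_nonneg_left hQbound hcR₀]

end Matrix

/-- Lemma 1: global convergence to the limit cycle of the forced RLC circuit,
in rotating coordinates.  With `Q, R` Hermitian positive definite, `J₁` skew-Hermitian and
`x̄` an equilibrium of `ẋ = (J₁ - R) Q x + g`, every solution satisfies the exponential
decay estimate for the shifted Hamiltonian and converges to `x̄`, so `x̄` is the unique
possible limit point of every solution. -/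
theorem forced_RLC_global_convergence {n : ℕ}
    (Q R J₁ : Matrix (Fin n) (Fin n) ℂ)
    (hQ : Q.PosDef) (hR : R.PosDef) (hJ : J₁ᴴ = -J₁)
    (g : Fin n → ℂ)
    (xbar : Fin n → ℂ)
    (heq : (J₁ - R).mulVec (Q.mulVec xbar) + g = 0)
    (t₀ : ℝ) (x : ℝ → (Fin n → ℂ))
    (hx : ∀ t, t₀ ≤ t → HasDerivAt x ((J₁ - R).mulVec (Q.mulVec (x t)) + g) t) :
    (∀ t, t₀ ≤ t →
      (1 / 2 : ℝ) * (star (x t - xbar) ⬝ᵥ Q.mulVec (x t - xbar)).re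
        ≤ Real.exp (-2 * (⨅ i, hR.isHermitian.eigenvalues i) *
              (⨅ i, hQ.isHermitian.eigenvalues i) * (t - t₀)) *
            ((1 / 2 : ℝ) * (star (x t₀ - xbar) ⬝ᵥ Q.mulVec (x t₀ - xbar)).re)) ∧
    Filter.Tendsto x Filter.atTop (nhds xbar) := by
  set lR := ⨅ i, hR.isHermitian.eigenvalues i
  set lQ := ⨅ i, hQ.isHermitian.eigenvalues i
  have hlR : ∀ i, lR ≤ hR.isHermitian.eigenvalues i := ciInf_le (Finite.bddBelow_range _)
  have hlQ : ∀ i, lQ ≤ hQ.isHermitian.eigenvalues i := ciInf_le (Finite.bddBelow_range _)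
  have hlR₀ : 0 ≤ lR := Real.iInf_nonneg fun i => (hR.eigenvalues_pos i).le
  have hlQ₀ : 0 ≤ lQ := Real.iInf_nonneg fun i => (hQ.eigenvalues_pos i).le
  have herror : ∀ t, t₀ ≤ t →
      HasDerivAt (fun s => x s - xbar) ((J₁ - R) *ᵥ (Q *ᵥ (x t - xbar))) t := by
    intro t ht
    rw [mulVec_sub, mulVec_sub, eq_neg_of_add_eq_zero_left heq, sub_neg_eq_add]
    exact (hx t ht).sub_const xbar
  have hdecay : ∀ t, t₀ ≤ t → (star (x t - xbar) ⬝ᵥ Q *ᵥ (x t - xbar)).re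
      ≤ exp (-2 * lR * lQ * (t - t₀)) * (star (x t₀ - xbar) ⬝ᵥ Q *ᵥ (x t₀ - xbar)).re :=
    fun t => re_dotProduct_mulVec_le_exp_of_portHamiltonian
      hQ.isHermitian hR.isHermitian hJ hlQ₀ hlQ hlR₀ hlR herror
  refine ⟨fun t ht => by linarith [hdecay t ht], ?_⟩
  rcases isEmpty_or_nonempty (Fin n) with hn | hn
  · exact tendsto_const_nhds.congr fun _ => Subsingleton.elim _ _
  have hK : -2 * lR * lQ < 0 := by
    nlinarith [mul_pos hR.iInf_eigenvalues_pos hQ.iInf_eigenvalues_pos]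
  exact tendsto_of_mul_norm_sub_sq_le_exp hQ.iInf_eigenvalues_pos hK fun t ht =>
    (hQ.isHermitian.mul_norm_sq_le_re_dotProduct_mulVec hlQ₀ hlQ _).trans (hdecay t ht)
end
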